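/- Every Sturmian word has infinitely many primitive factors w with ind(w) ≥ 2 (i.e., with ww a factor of u), of unbounded lengths. -/

import Mathlib

open Filter Topology

namespace SturmianPaper

variable {A : Type*} [DecidableEq A]

/-- The factor `w` occurs in the infinite word `u` at position `i`. -/
def FactorAt (u : ℕ → A) (w : List A) (i : ℕ) : Prop :=
  w = (List.range w.length).map fun j => u (i + j)

/-- `w` is a factor of the infinite word `u`. -/
def IsFactor (u : ℕ → A) (w : List A) : Prop := ∃ i, FactorAt u w i

/-- The factor complexity of `u`: the number of factors of length `n`. -/
noncomputable def complexity (u : ℕ → A) (n : ℕ) : ℕ :=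
  Set.ncard {w : List A | IsFactor u w ∧ w.length = n}

/-- A Sturmian word: complexity `n + 1` for every `n` (this forces aperiodicity). -/
def IsSturmian (u : ℕ → A) : Prop := ∀ n, complexity u n = n + 1

/-- `u` is eventually periodic. -/
def EventuallyPeriodic (u : ℕ → A) : Prop :=
  ∃ p > 0, ∃ N, ∀ n ≥ N, u (n + p) = u n

/-- `u` is uniformly recurrent: every factor occurs with bounded gaps. -/
def UniformlyRecurrent (u : ℕ → A) : Prop :=
  ∀ w, IsFactor u w → ∃ B, ∀ k, ∃ i, k ≤ i ∧ i < k + B ∧ FactorAt u w i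

/-- The number of occurrences of `w` in the finite word `x`. -/
def occCount (x w : List A) : ℕ :=
  ((List.range (x.length + 1)).filter fun i => decide (w <+: x.drop i)).length

/-- `v` is a return word of the factor `w` of `u`. -/
def IsReturnWord (u : ℕ → A) (w v : List A) : Prop :=
  v ≠ [] ∧ IsFactor u (v ++ w) ∧ w <+: v ++ w ∧ occCount (v ++ w) w = 2

/-- Recurrence function: `R n + 1` is the maximal length of a complete return word
`v ++ w` over factors `w` of length `n` and return words `v` of `w`. -/
noncomputable def recFun (u : ℕ → A) (n : ℕ) : ℕ :=
  sSup {m | ∃ w v, IsFactor u w ∧ w.length = n ∧ IsReturnWord u w v ∧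
    m + 1 = v.length + w.length}

/-- `v = w ^ (|v| / |w|)`: `v` is a fractional power of `w`,
i.e. a prefix of `w w w ⋯` of length at least `|w|`. -/
def FracPow (w v : List A) : Prop :=
  w ≠ [] ∧ w.length ≤ v.length ∧ ∀ i < v.length, v[i]? = w[i % w.length]?

/-- The set of rational exponents `r` (viewed inside `ℝ`) such that `w ^ r ∈ L(u)`. -/
def expSet (u : ℕ → A) (w : List A) : Set ℝ :=
  {r | ∃ v, IsFactor u v ∧ FracPow w v ∧ r = (v.length : ℝ) / (w.length : ℝ)}

/-- The index of the factor `w` in `u`: `sup {r ∈ ℚ | w ^ r ∈ L(u)}`. -/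
noncomputable def index (u : ℕ → A) (w : List A) : ℝ := sSup (expSet u w)

/-- A finite word is primitive if it is not a proper integer power. -/
def Primitive (w : List A) : Prop :=
  w ≠ [] ∧ ∀ (z : List A) (k : ℕ), 2 ≤ k → w ≠ (List.replicate k z).flatten

/-- `w` is left special in `u` (alphabet `Bool`, `true = A`, `false = B`). -/
def LeftSpecial (u : ℕ → Bool) (w : List Bool) : Prop :=
  IsFactor u (true :: w) ∧ IsFactor u (false :: w)

/-- `w` is right special in `u`. -/
def RightSpecial (u : ℕ → Bool) (w : List Bool) : Prop :=
  IsFactor u (w ++ [true]) ∧ IsFactor u (w ++ [false])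

/-- The Sturmian word of slope `α` and intercept `x₀`, coding the orbit of `x₀`
under the exchange of the two intervals `I_A = [0, α)` (coded `true`) and
`I_B = [α, 1)` (coded `false`); the exchange is the rotation `x ↦ x + (1 - α) mod 1`. -/
noncomputable def sturmianWord (α x₀ : ℝ) : ℕ → Bool :=
  fun n => decide (Int.fract (x₀ + n * (1 - α)) < α)

/-- The Sturmian morphism `A ↦ AᶜB`, `B ↦ A` applied to a finite word. -/
def phiW (c : ℕ) (w : List Bool) : List Bool :=
  (w.map fun b => if b then List.replicate c true ++ [false] else [true]).flatten

/-- The Sturmian morphism `A ↦ AᶜB`, `B ↦ A` applied to an infinite word. -/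
noncomputable def phiInf (c : ℕ) (u : ℕ → Bool) : ℕ → Bool :=
  fun n => (phiW c ((List.range (n + 1)).map u)).getD n false

end SturmianPaper

/-!
A Sturmian word `u` has `n + 1` factors of length `n`, so two of the length-`n` windows at
positions `i, …, i + n + 1` coincide; as `u` is not periodic, for some `i` they do so at a
distance `q ≤ n`, which yields a factor of length `n + q` with period `q`, hence a square of
period `q`. Since `u` has only one right special factor of each length, a fixed period `p`
occurs only in factors of bounded length. Taking `n` beyond these bounds for all `p ≤ N` forces
`q > N`; for the least such `q` the root of the square is primitive, and the same bound makes
the index of the root finite, hence at least `2`.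
-/

namespace List

variable {α : Type*}

theorem HasPeriod.take_append_take_prefix {x : List α} {p : ℕ} (hx : x.HasPeriod p)
    (hp : 2 * p ≤ x.length) : x.take p ++ x.take p <+: x := by
  have hshift : (x.drop p).take p = x.take p :=
    ((hx.drop_prefix p).take p).eq_of_length (by simp; omega)
  calc x.take p ++ x.take p = x.take (p + p) := by rw [take_add, hshift]
    _ <+: x := take_prefix _ _

theorem hasPeriod_flatten_replicate (z : List α) :
    ∀ k, ((replicate k z).flatten).HasPeriod z.length
  | 0 => hasPeriod_empty _
  | 1 => hasPeriod_of_length_le _ _ (by simp)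
  | k + 2 => by
    have hz : take z.length (replicate (k + 1) z).flatten = z := by simp [replicate_succ]
    have := (hasPeriod_flatten_replicate z (k + 1)).take_append z.length z.length _ dvd_rfl
      (by simp [replicate_succ])
    rwa [hz, ← flatten_cons, ← replicate_succ] at this

theorem HasPeriod.of_hasPeriod_take {x : List α} {p q : ℕ} (hx : x.HasPeriod q) (hq : 0 < q)
    (hpq : p ∣ q) (hp : (x.take q).HasPeriod p) : x.HasPeriod p := by
  have hpq' : p ≤ q := Nat.le_of_dvd hq hpq
  have hp0 : 0 < p := Nat.pos_of_dvd_of_pos hpq hq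
  rw [hasPeriod_iff_forall_getElem?_mod] at hx hp ⊢
  intro i hi
  have hiq : i % q < q := Nat.mod_lt i hq
  have hip : i % p < q := (Nat.mod_lt i hp0).trans_le hpq'
  have hiq' : i % q ≤ i := Nat.mod_le i q
  calc x[i]? = (x.take q)[i % q]? := by rw [hx i hi, getElem?_take_of_lt hiq]
    _ = (x.take q)[i % p]? := by
      rw [hp _ (by simp; omega), Nat.mod_mod_of_dvd i hpq]
    _ = x[i % p]? := getElem?_take_of_lt hip

end List

namespace SturmianPaper

variable {A : Type*}

theorem primitive_take_of_minimal {x : List A} {q : ℕ} (hq : 0 < q) (hqx : q ≤ x.length)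
    (hx : x.HasPeriod q) (hmin : ∀ p, 0 < p → p < q → ¬ x.HasPeriod p) :
    Primitive (x.take q) := by
  refine ⟨List.ne_nil_of_length_pos (by simp; omega), fun z k hk hzk => ?_⟩
  have hlen : k * z.length = q := by
    simpa [hqx] using (congrArg List.length hzk).symm
  have hz : 0 < z.length := Nat.pos_of_ne_zero (by rintro h; simp [h] at hlen; omega)
  refine hmin z.length hz (by nlinarith)
    (hx.of_hasPeriod_take hq ⟨k, by rw [← hlen, mul_comm]⟩ ?_)
  rw [hzk]
  exact List.hasPeriod_flatten_replicate z k

theorem FracPow.hasPeriod {w v : List A} (h : FracPow w v) : v.HasPeriod w.length := by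
  obtain ⟨hw, hwv, hv⟩ := h
  have hlen : 0 < w.length := List.length_pos_iff.mpr hw
  refine List.hasPeriod_iff_forall_getElem?_mod.mpr fun i hi => ?_
  have hmod : i % w.length < w.length := Nat.mod_lt i hlen
  rw [hv i hi, hv _ (by omega), Nat.mod_eq_of_lt hmod]

theorem fracPow_append_self {w : List A} (hw : w ≠ []) : FracPow w (w ++ w) := by
  refine ⟨hw, by simp, fun i hi => ?_⟩
  have hper : (w ++ w).HasPeriod w.length := by
    simpa using (List.hasPeriod_of_length_le w w.length le_rfl).take_append w.length w.length w
      dvd_rfl le_rfl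
  rw [← hper.getElem?_mod _ _ _ hi,
    List.getElem?_append_left (Nat.mod_lt i (List.length_pos_iff.mpr hw))]

theorem two_le_index {u : ℕ → A} {w : List A} {L : ℕ} (hw : w ≠ [])
    (hL : ∀ v, IsFactor u v → v.HasPeriod w.length → v.length < L)
    (hww : IsFactor u (w ++ w)) : 2 ≤ index u w := by
  have hlen : (1 : ℝ) ≤ w.length := by exact_mod_cast List.length_pos_iff.mpr hw
  have hbdd : BddAbove (expSet u w) := by
    refine ⟨L, ?_⟩
    rintro r ⟨v, hv, hfp, rfl⟩
    calc (v.length : ℝ) / w.length ≤ v.length := div_le_self (by positivity) hlen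
      _ ≤ L := by exact_mod_cast (hL v hv hfp.hasPeriod).le
  refine le_csSup hbdd ⟨w ++ w, hww, fracPow_append_self hw, ?_⟩
  rw [List.length_append, Nat.cast_add, ← two_mul, mul_div_assoc,
    div_self (by positivity), mul_one]

def window (u : ℕ → A) (i n : ℕ) : List A := (List.range n).map fun j => u (i + j)

section Window

variable {u : ℕ → A} {i j n m p : ℕ}

@[simp]
theorem length_window : (window u i n).length = n := by simp [window]

theorem getElem?_window (h : j < n) : (window u i n)[j]? = some (u (i + j)) := by
  simp [window, List.getElem?_range h]

theorem isFactor_window : IsFactor u (window u i n) := ⟨i, by simp [FactorAt, window]⟩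

theorem IsFactor.exists_eq_window {w : List A} (h : IsFactor u w) :
    ∃ i, w = window u i w.length := h

theorem window_add : window u i (m + n) = window u i m ++ window u (i + m) n := by
  simp [window, List.range_add, Nat.add_assoc]

theorem window_succ : window u i (n + 1) = window u i n ++ [u (i + n)] := by
  simp [window, List.range_succ]

theorem window_prefix (h : m ≤ n) : window u i m <+: window u i n := by
  obtain ⟨k, rfl⟩ := Nat.exists_eq_add_of_le h
  rw [window_add]
  exact List.prefix_append _ _

theorem window_eq_window_iff :
    window u i n = window u j n ↔ ∀ t < n, u (i + t) = u (j + t) := by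
  simp [window, List.map_inj_left]

theorem window_eq_window_add_iff_hasPeriod :
    window u i n = window u (i + p) n ↔ (window u i (n + p)).HasPeriod p := by
  rw [window_eq_window_iff, List.hasPeriod_iff_getElem?]
  refine forall_congr' fun t => ?_
  simp only [length_window, Nat.add_sub_cancel]
  refine imp_congr_right fun ht => ?_
  rw [getElem?_window (by omega), getElem?_window (by omega), Option.some_inj, Nat.add_assoc,
    Nat.add_comm t p]

theorem IsFactor.infix {x y : List A} (hx : IsFactor u x) (hyx : y <:+: x) : IsFactor u y := by
  obtain ⟨s, t, rfl⟩ := hyx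
  obtain ⟨i, hi⟩ := hx.exists_eq_window
  simp only [List.length_append, window_add] at hi
  exact ⟨i + s.length, (List.append_inj (List.append_inj hi.symm (by simp)).1.symm
    (by simp)).2.symm ▸ by simp [FactorAt, window]⟩

theorem IsFactor.exists_append_singleton {w : List A} (h : IsFactor u w) :
    ∃ a, IsFactor u (w ++ [a]) := by
  obtain ⟨i, hi⟩ := h.exists_eq_window
  exact ⟨u (i + w.length), by rw [hi, length_window, ← window_succ]; exact isFactor_window⟩

theorem eventuallyPeriodic_of_forall_eq (hij : i < j) (h : ∀ t, u (i + t) = u (j + t)) :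
    EventuallyPeriodic u :=
  ⟨j - i, by omega, i, fun m hm => by
    simpa [show i + (m - i) = m by omega, show j + (m - i) = m + (j - i) by omega]
      using (h (m - i)).symm⟩

theorem infinite_setOf_ne (hu : ¬ EventuallyPeriodic u) (hp : 0 < p) :
    {i | u i ≠ u (i + p)}.Infinite := by
  intro hfin
  obtain ⟨N, hN⟩ := hfin.bddAbove
  refine hu ⟨p, hp, N + 1, fun m hm => ?_⟩
  by_contra hne
  exact absurd (hN (Ne.symm hne)) (by omega)

theorem exists_window_eq_add_and_ne (hu : ¬ EventuallyPeriodic u) (hp : 0 < p)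
    (hw : window u i n = window u (i + p) n) :
    ∃ j, window u j n = window u (j + p) n ∧ u (j + n) ≠ u (j + p + n) := by
  classical
  have hex : ∃ m, i ≤ m ∧ u m ≠ u (m + p) := by
    by_contra! h
    exact hu ⟨p, hp, i, fun m hm => (h m hm).symm⟩
  obtain ⟨him, hbreak⟩ := Nat.find_spec hex
  have hrun : ∀ m, i ≤ m → m < Nat.find hex → u m = u (m + p) := fun m him hm =>
    not_not.mp fun hne => Nat.find_min hex hm ⟨him, hne⟩
  rw [window_eq_window_iff] at hw
  have hin : i + n ≤ Nat.find hex := by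
    by_contra! h
    have := hw (Nat.find hex - i) (by omega)
    rw [show i + (Nat.find hex - i) = Nat.find hex by omega, Nat.add_right_comm,
      show i + (Nat.find hex - i) = Nat.find hex by omega] at this
    exact hbreak this
  refine ⟨Nat.find hex - n, window_eq_window_iff.mpr fun t ht => ?_, ?_⟩
  · rw [Nat.add_right_comm]
    exact hrun _ (by omega) (by omega)
  · rwa [Nat.sub_add_cancel (by omega), Nat.add_right_comm, Nat.sub_add_cancel (by omega)]

def IsRightSpecial (u : ℕ → A) (w : List A) : Prop :=
  ∃ a b, a ≠ b ∧ IsFactor u (w ++ [a]) ∧ IsFactor u (w ++ [b])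

theorem isRightSpecial_window_of_ne (hw : window u i n = window u (i + p) n)
    (hne : u (i + n) ≠ u (i + p + n)) : IsRightSpecial u (window u i n) :=
  ⟨_, _, hne, window_succ ▸ isFactor_window, hw ▸ window_succ ▸ isFactor_window⟩

theorem forall_eq_of_window_eq_of_not_isRightSpecial (hw : window u i n = window u j n)
    (hrs : ∀ m ≥ n, ¬ IsRightSpecial u (window u i m)) : ∀ t, u (i + t) = u (j + t) := by
  have hwin : ∀ m ≥ n, window u i m = window u j m := by
    intro m hm
    induction m, hm using Nat.le_induction with
    | base => exact hw
    | succ m hm ih =>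
      have hlet : u (i + m) = u (j + m) := by
        by_contra hne
        exact hrs m hm ⟨_, _, hne, window_succ ▸ isFactor_window,
          ih ▸ window_succ ▸ isFactor_window⟩
      rw [window_succ, window_succ, ih, hlet]
  exact fun t => window_eq_window_iff.mp (hwin (max n (t + 1)) (le_max_left _ _)) t (by omega)

end Window

namespace IsSturmian

variable {u : ℕ → A} (hu : IsSturmian u)
include hu

theorem finite_factors (n : ℕ) : {w | IsFactor u w ∧ w.length = n}.Finite := by
  by_contra h
  have := hu n
  rw [complexity, Set.Infinite.ncard h] at this
  omega

theorem not_eventuallyPeriodic : ¬ EventuallyPeriodic u := by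
  classical
  rintro ⟨p, hp, N, hper⟩
  have hlow : ∀ n i, ∃ i' < N + p, window u i' n = window u i n := by
    intro n i
    induction i using Nat.strong_induction_on with
    | _ i ih =>
      by_cases hi : i < N + p
      · exact ⟨i, hi, rfl⟩
      obtain ⟨i', hi', he⟩ := ih (i - p) (by omega)
      refine ⟨i', hi', he.trans (window_eq_window_iff.mpr fun t _ => ?_)⟩
      rw [← hper (i - p + t) (by omega)]
      congr 1
      omega
  have hsub : {w | IsFactor u w ∧ w.length = N + p} ⊆
      ↑((Finset.range (N + p)).image fun i => window u i (N + p)) := by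
    rintro w ⟨hw, hl⟩
    obtain ⟨i, hi⟩ := hw.exists_eq_window
    obtain ⟨i', hi', he⟩ := hlow (N + p) i
    rw [hi, hl]
    simpa using ⟨i', hi', he⟩
  have := (Set.ncard_le_ncard hsub).trans_eq (Set.ncard_coe_finset _)
  have := Finset.card_image_le.trans_eq (Finset.card_range (N + p)) |>.trans' this
  rw [← complexity, hu] at this
  omega

-- Removing one extension of each of two right special factors of length `n` still leaves an
-- extension of every factor of length `n`, so `n + 2 - 2 ≥ n + 1`.
theorem isRightSpecial_unique {v w : List A} (hv : IsRightSpecial u v)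
    (hw : IsRightSpecial u w) (hl : v.length = w.length) : v = w := by
  by_contra hne
  obtain ⟨a, a', ha, hva, hva'⟩ := hv
  obtain ⟨b, b', hb, hwb, hwb'⟩ := hw
  set n := v.length
  set S := {x | IsFactor u x ∧ x.length = n + 1} \ {v ++ [a], w ++ [b]}
  have hcover : {x | IsFactor u x ∧ x.length = n} ⊆ List.dropLast '' S := by
    rintro x ⟨hx, hxl⟩
    obtain ⟨c, hc, hcS⟩ :
        ∃ c, IsFactor u (x ++ [c]) ∧ x ++ [c] ∉ ({v ++ [a], w ++ [b]} : Set _) := by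
      by_cases hxv : x = v
      · subst hxv
        exact ⟨a', hva', by simp [Ne.symm ha, hne]⟩
      by_cases hxw : x = w
      · subst hxw
        exact ⟨b', hwb', by simp [Ne.symm hb, hxv]⟩
      obtain ⟨c, hc⟩ := hx.exists_append_singleton
      exact ⟨c, hc, by simp [hxv, hxw]⟩
    exact ⟨x ++ [c], ⟨⟨hc, by simp [hxl]⟩, hcS⟩, List.dropLast_concat⟩
  have hS : S.ncard = n := by
    have hpair :
        ({v ++ [a], w ++ [b]} : Set (List A)) ⊆ {x | IsFactor u x ∧ x.length = n + 1} := by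
      rintro x (rfl | rfl)
      exacts [⟨hva, by simp [n]⟩, ⟨hwb, by simp [hl]⟩]
    rw [Set.ncard_sdiff hpair, Set.ncard_pair (by simp [hne])]
    have := hu (n + 1)
    rw [complexity] at this
    omega
  have := (Set.ncard_le_ncard hcover (((hu.finite_factors _).sdiff).image _)).trans
    (Set.ncard_image_le ((hu.finite_factors _).sdiff))
  rw [← complexity, hu, hS] at this
  omega

theorem exists_window_eq (i n : ℕ) :
    ∃ a b, i ≤ a ∧ a < b ∧ b ≤ i + n + 1 ∧ window u a n = window u b n := by
  have hmaps : Set.MapsTo (window u · n) (Set.Icc i (i + n + 1))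
      {w | IsFactor u w ∧ w.length = n} := fun _ _ => ⟨isFactor_window, length_window⟩
  have hcard : {w | IsFactor u w ∧ w.length = n}.ncard < (Set.Icc i (i + n + 1)).ncard := by
    rw [← complexity, hu, Set.ncard_Icc_nat]
    omega
  obtain ⟨a, ha, b, hb, hab, he⟩ :=
    Set.exists_ne_map_eq_of_ncard_lt_of_maps_to hcard hmaps (hu.finite_factors n)
  rcases hab.lt_or_gt with hab | hab
  · exact ⟨a, b, ha.1, hab, hb.2, he⟩
  · exact ⟨b, a, hb.1, hab, ha.2, he.symm⟩

theorem exists_hasPeriod {n : ℕ} (hn : 0 < n) :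
    ∃ q ≤ n, 0 < q ∧ ∃ x, IsFactor u x ∧ n + q ≤ x.length ∧ x.HasPeriod q := by
  by_contra! h
  refine hu.not_eventuallyPeriodic ⟨n + 1, by omega, 0, fun i _ => ?_⟩
  obtain ⟨a, b, hia, hab, hb, he⟩ := hu.exists_window_eq i n
  have hq : ¬ b - a ≤ n := fun hq =>
    h (b - a) hq (by omega) (window u a (n + (b - a))) isFactor_window (by simp)
      (window_eq_window_add_iff_hasPeriod.mp (by rwa [Nat.add_sub_cancel' hab.le]))
  obtain ⟨rfl, rfl⟩ : a = i ∧ b = i + n + 1 := by omega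
  simpa [Nat.add_assoc] using (window_eq_window_iff.mp he 0 hn).symm

-- For `m > p` the right special factor of length `m` is the end of a long `p`-run, so no window
-- starting at a break of the period is right special: two breaks with the same factor of length
-- `p + 1` would then have the same future.
theorem exists_length_lt_of_hasPeriod {p : ℕ} (hp : 0 < p) :
    ∃ L, ∀ x, IsFactor u x → x.HasPeriod p → x.length < L := by
  by_contra! hlong
  have hspecial : ∀ m > p, ∃ j, IsRightSpecial u (window u j m) ∧ u j = u (j + p) := by
    intro m hm
    obtain ⟨x, hx, hxp, hxl⟩ := hlong (m + p)
    obtain ⟨i, hi⟩ := hx.exists_eq_window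
    have hrun : window u i m = window u (i + p) m := by
      refine window_eq_window_add_iff_hasPeriod.mpr (hxp.infix ?_)
      rw [hi]
      exact (window_prefix hxl).isInfix
    obtain ⟨j, hj, hne⟩ := exists_window_eq_add_and_ne hu.not_eventuallyPeriodic hp hrun
    exact ⟨j, isRightSpecial_window_of_ne hj hne,
      by simpa using window_eq_window_iff.mp hj 0 (by omega)⟩
  obtain ⟨i, hi, i', -, hii', he⟩ :=
    (infinite_setOf_ne hu.not_eventuallyPeriodic hp).exists_lt_map_eq_of_mapsTo
      (f := (window u · (p + 1))) (t := {w | IsFactor u w ∧ w.length = p + 1})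
      (fun _ _ => ⟨isFactor_window, length_window⟩) (hu.finite_factors (p + 1))
  refine hu.not_eventuallyPeriodic (eventuallyPeriodic_of_forall_eq hii'
    (forall_eq_of_window_eq_of_not_isRightSpecial he fun m hm hrs => hi ?_))
  obtain ⟨j, hj, hjp⟩ := hspecial m (by omega)
  have heq := window_eq_window_iff.mp (hu.isRightSpecial_unique hrs hj (by simp))
  calc u i = u j := by simpa using heq 0 (by omega)
    _ = u (j + p) := hjp
    _ = u (i + p) := (heq p (by omega)).symm

end IsSturmian

theorem unbounded_primitive_squares_general {A : Type*}
    (u : ℕ → A) (hst : IsSturmian u) (N : ℕ) :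
    ∃ w : List A, IsFactor u w ∧ Primitive w ∧ N < w.length ∧
      IsFactor u (w ++ w) ∧ 2 ≤ index u w := by
  classical
  choose! L hL using fun p (hp : 0 < p) => hst.exists_length_lt_of_hasPeriod hp
  set n := N + 1 + ∑ p ∈ Finset.range (N + 1), L p
  have hLn : ∀ p ≤ N, L p ≤ n := fun p hp =>
    (Finset.single_le_sum (f := L) (fun _ _ => Nat.zero_le _)
      (Finset.mem_range.mpr (show p < N + 1 by omega))).trans (by omega)
  obtain ⟨q₀, hq₀n, hq₀⟩ := hst.exists_hasPeriod (n := n) (by omega)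
  have hex : ∃ q, 0 < q ∧ ∃ x, IsFactor u x ∧ n + q ≤ x.length ∧ x.HasPeriod q :=
    ⟨q₀, hq₀⟩
  obtain ⟨hq, x, hx, hxl, hxq⟩ := Nat.find_spec hex
  set q := Nat.find hex
  have hqn : q ≤ n := (Nat.find_min' hex hq₀).trans hq₀n
  have hNq : N < q := by
    by_contra! hqN
    exact absurd (hL q hq x hx hxq) (by have := hLn q hqN; omega)
  have hmin : ∀ p, 0 < p → p < q → ¬ x.HasPeriod p := fun p hp hpq hxp =>
    Nat.find_min hex hpq ⟨hp, x, hx, by omega, hxp⟩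
  have hww : IsFactor u (x.take q ++ x.take q) :=
    hx.infix (hxq.take_append_take_prefix (by omega)).isInfix
  have hprim := primitive_take_of_minimal (x := x) (q := q) hq (by omega) hxq hmin
  have hlen : (x.take q).length = q := by simp; omega
  refine ⟨x.take q, hx.infix (List.take_prefix _ _).isInfix, hprim, by rwa [hlen], hww, ?_⟩
  exact two_le_index hprim.1 (by rw [hlen]; exact hL q hq) hww

/-- every Sturmian word has primitive factors `w` of unbounded
lengths with `ww` a factor, hence with `ind(w) ≥ 2`. -/
theorem unbounded_primitive_squares {A : Type*} [DecidableEq A]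
    (u : ℕ → A) (hst : IsSturmian u) (N : ℕ) :
    ∃ w : List A, IsFactor u w ∧ Primitive w ∧ N < w.length ∧
      IsFactor u (w ++ w) ∧ 2 ≤ index u w :=
  unbounded_primitive_squares_general u hst N

end SturmianPaper
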